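/- Let p, q, r be positive integers, let G ∈ ℝ^{p×q} be a fixed matrix, and let P ∈ ℝ^{q×r} be a random matrix whose entries are i.i.d. normal N(0, 1/r). Then E[‖G P Pᵀ‖²] = (1 + (q+1)/r) ‖G‖², where ‖·‖ denotes the Frobenius norm. -/

import Mathlib

/-!
Expanding the squares, `‖G P Pᵀ‖²` is a quadratic form in `G` whose coefficients are degree-four
monomials `P_a P_b P_c P_d` in the entries of `P`. For independent centred entries with
`E x² = v` and `E x⁴ = 3 v²` (Isserlis), `E[P_a P_b P_c P_d]` is `v²` times the number of ways
to split `a, b, c, d` into two pairs of equal indices. In `‖G P Pᵀ‖²` the three pairings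
contribute `r²`, `q r` and `r` times `v² ‖G‖²`, and `v² (r² + q r + r) = 1 + (q + 1) / r`
for `v = 1 / r`.
-/

open MeasureTheory ProbabilityTheory Real Matrix

open scoped NNReal

lemma hasDerivAt_mul_exp_mul_sq_div_two {f : ℝ → ℝ} {f' c t : ℝ} (hf : HasDerivAt f f' t) :
    HasDerivAt (fun t ↦ f t * rexp (c * t ^ 2 / 2))
      ((f' + c * t * f t) * rexp (c * t ^ 2 / 2)) t := by
  have h : HasDerivAt (fun t ↦ c * t ^ 2 / 2) (c * t) t :=
    (((hasDerivAt_pow 2 t).const_mul c).div_const 2).congr_deriv (by push_cast; ring)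
  exact (hf.mul h.exp).congr_deriv (by ring)

lemma integral_pow_two_gaussianReal (v : ℝ≥0) : ∫ x, x ^ 2 ∂gaussianReal 0 v = v := by
  rw [← variance_of_integral_eq_zero aemeasurable_id' integral_id_gaussianReal]
  exact variance_fun_id_gaussianReal

/-- Computed as the fourth derivative at `0` of the moment generating function
`t ↦ exp (v t² / 2)`. -/
lemma integral_pow_four_gaussianReal (v : ℝ≥0) :
    ∫ x, x ^ 4 ∂gaussianReal 0 v = 3 * (v : ℝ) ^ 2 := by
  have h := iteratedDeriv_mgf_zero (X := fun x ↦ x) (μ := gaussianReal 0 v) (by simp) 4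
  simp only [mgf_fun_id_gaussianReal, zero_mul, zero_add, Pi.pow_apply] at h
  rw [← h]
  set c : ℝ := (v : ℝ)
  have d1 : deriv (fun t ↦ rexp (c * t ^ 2 / 2)) = fun t ↦ c * t * rexp (c * t ^ 2 / 2) := by
    ext t
    simpa using (hasDerivAt_mul_exp_mul_sq_div_two (c := c) (hasDerivAt_const t (1 : ℝ))).deriv
  have d2 : deriv (fun t ↦ c * t * rexp (c * t ^ 2 / 2)) =
      fun t ↦ (c + c ^ 2 * t ^ 2) * rexp (c * t ^ 2 / 2) := by
    ext t
    rw [(hasDerivAt_mul_exp_mul_sq_div_two ((hasDerivAt_id' t).const_mul c)).deriv]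
    ring
  have d3 : deriv (fun t ↦ (c + c ^ 2 * t ^ 2) * rexp (c * t ^ 2 / 2)) =
      fun t ↦ (3 * c ^ 2 * t + c ^ 3 * t ^ 3) * rexp (c * t ^ 2 / 2) := by
    ext t
    rw [(hasDerivAt_mul_exp_mul_sq_div_two
      (((hasDerivAt_pow 2 t).const_mul (c ^ 2)).const_add c)).deriv]
    ring
  have d4 := hasDerivAt_mul_exp_mul_sq_div_two (c := c)
    (((hasDerivAt_id' 0).const_mul (3 * c ^ 2)).add ((hasDerivAt_pow 3 0).const_mul (c ^ 3)))
  simp only [iteratedDeriv_succ, iteratedDeriv_zero, d1, d2, d3]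
  convert d4.deriv using 1 <;> simp

lemma ProbabilityTheory.HasLaw.memLp_of_gaussianReal {Ω : Type*} [MeasurableSpace Ω]
    {P : Measure Ω} {X : Ω → ℝ} {m : ℝ} {v : ℝ≥0} (hX : HasLaw X (gaussianReal m v) P)
    (p : ℝ≥0) : MemLp X p P := by
  have h := memLp_id_gaussianReal (μ := m) (v := v) p
  rw [← hX.map_eq] at h
  exact (memLp_map_measure_iff aestronglyMeasurable_id hX.aemeasurable).1 h

theorem MeasureTheory.MemLp.integrable_mul_mul_mul {Ω 𝕜 : Type*} [MeasurableSpace Ω]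
    [NormedCommRing 𝕜] {μ : Measure Ω} {f g h k : Ω → 𝕜} (hf : MemLp f 4 μ) (hg : MemLp g 4 μ)
    (hh : MemLp h 4 μ) (hk : MemLp k 4 μ) : Integrable (fun ω ↦ f ω * g ω * h ω * k ω) μ := by
  have hprod := MemLp.prod' (s := Finset.univ) (f := ![f, g, h, k]) (p := fun _ ↦ 4)
    fun i _ ↦ by fin_cases i <;> assumption
  rw [← memLp_one_iff_integrable]
  convert hprod using 1
  · ext ω; simp [Fin.prod_univ_four, mul_assoc]
  · simp [ENNReal.mul_inv_cancel]

theorem Finset.prod_univ_pow_count {ι M : Type*} [Fintype ι] [DecidableEq ι] [CommMonoid M]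
    (s : Multiset ι) (f : ι → M) : ∏ i, f i ^ s.count i = (s.map f).prod := by
  rw [Finset.prod_multiset_map_count]
  refine (Finset.prod_subset (Finset.subset_univ s.toFinset) fun i _ hi ↦ ?_).symm
  rw [Multiset.count_eq_zero_of_notMem (by simpa using hi), pow_zero]

section Pairings

variable {ι : Type*} [DecidableEq ι]

/-- The number of ways to split `a, b, c, d` into two pairs of equal indices. -/
def pairingCount (a b c d : ι) : ℝ :=
  (if a = b ∧ c = d then 1 else 0) + (if a = c ∧ b = d then 1 else 0) +
    (if a = d ∧ b = c then 1 else 0)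

theorem prod_apply_count_eq_pairingCount [Fintype ι] {F : ι → ℕ → ℝ} {V : ℝ}
    (h0 : ∀ i, F i 0 = 1) (h1 : ∀ i, F i 1 = 0) (h2 : ∀ i, F i 2 = V)
    (h4 : ∀ i, F i 4 = 3 * V ^ 2) (a b c d : ι) :
    ∏ i, F i (Multiset.count i {a, b, c, d}) = V ^ 2 * pairingCount a b c d := by
  rw [← Finset.prod_subset (Finset.subset_univ {a, b, c, d}) fun i _ hi ↦ by
    simp only [Finset.mem_insert, Finset.mem_singleton, not_or] at hi; simp [hi, h0]]
  by_cases hab : a = b <;> by_cases hac : a = c <;> by_cases had : a = d <;>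
    by_cases hbc : b = c <;> by_cases hbd : b = d <;> by_cases hcd : c = d <;>
    simp_all [pairingCount, Finset.prod_insert, eq_comm (α := ι)] <;> ring

namespace ProbabilityTheory.iIndepFun

variable [Fintype ι] {Ω : Type*} [MeasurableSpace Ω] {P : Measure Ω} {X : ι → Ω → ℝ}

/-- Isserlis' formula for four factors. -/
theorem integral_mul_mul_mul (hX : iIndepFun X P) (hmeas : ∀ i, AEMeasurable (X i) P) {V : ℝ}
    (h1 : ∀ i, ∫ ω, X i ω ∂P = 0) (h2 : ∀ i, ∫ ω, X i ω ^ 2 ∂P = V)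
    (h4 : ∀ i, ∫ ω, X i ω ^ 4 ∂P = 3 * V ^ 2) (a b c d : ι) :
    ∫ ω, X a ω * X b ω * X c ω * X d ω ∂P = V ^ 2 * pairingCount a b c d := by
  have := hX.isProbabilityMeasure
  have hmonomial (ω : Ω) :
      X a ω * X b ω * X c ω * X d ω = ∏ i, X i ω ^ Multiset.count i {a, b, c, d} := by
    simp [Finset.prod_univ_pow_count, mul_assoc]
  simp_rw [hmonomial]
  rw [hX.integral_fun_prod_comp hmeas fun i ↦ (continuous_pow _).aestronglyMeasurable]
  exact prod_apply_count_eq_pairingCount (F := fun i n ↦ ∫ ω, X i ω ^ n ∂P) (by simp)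
    (by simpa using h1) h2 h4 a b c d

theorem integral_mul_mul_mul_of_hasLaw_gaussianReal (hX : iIndepFun X P) {v : ℝ≥0}
    (hlaw : ∀ i, HasLaw (X i) (gaussianReal 0 v) P) (a b c d : ι) :
    ∫ ω, X a ω * X b ω * X c ω * X d ω ∂P = (v : ℝ) ^ 2 * pairingCount a b c d :=
  hX.integral_mul_mul_mul (fun i ↦ (hlaw i).aemeasurable)
    (fun i ↦ ((hlaw i).integral_comp aestronglyMeasurable_id).trans integral_id_gaussianReal)
    (fun i ↦ ((hlaw i).integral_comp (continuous_pow 2).aestronglyMeasurable).trans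
      (integral_pow_two_gaussianReal v))
    (fun i ↦ ((hlaw i).integral_comp (continuous_pow 4).aestronglyMeasurable).trans
      (integral_pow_four_gaussianReal v)) a b c d

end ProbabilityTheory.iIndepFun

end Pairings

theorem Matrix.mul_mul_transpose_apply_sq {m n o R : Type*} [Fintype n] [Fintype o] [CommRing R]
    (G : Matrix m n R) (P : Matrix n o R) (i : m) (j : n) :
    ((G * P * Pᵀ) i j) ^ 2 = ∑ a : n × o, ∑ b : n × o,
      G i a.1 * G i b.1 * (P a.1 a.2 * P j a.2 * P b.1 b.2 * P j b.2) := by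
  have h : (G * P * Pᵀ) i j = ∑ a : n × o, G i a.1 * P a.1 a.2 * P j a.2 := by
    simp [Matrix.mul_apply, Finset.sum_mul, Fintype.sum_prod_type, Finset.sum_comm (γ := n)]
  rw [h, sq, Finset.sum_mul_sum]
  refine Finset.sum_congr rfl fun a _ ↦ Finset.sum_congr rfl fun b _ ↦ ?_
  ring

theorem Matrix.sum_sum_mul_pairingCount {m n o : Type*} [Fintype m] [Fintype n] [Fintype o]
    [DecidableEq n] [DecidableEq o] (G : Matrix m n ℝ) :
    ∑ i, ∑ j, ∑ a : n × o, ∑ b : n × o,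
        G i a.1 * G i b.1 * pairingCount a (j, a.2) b (j, b.2) =
      ((Fintype.card o : ℝ) ^ 2 + Fintype.card n * Fintype.card o + Fintype.card o) *
        ∑ i, ∑ j, G i j ^ 2 := by
  simp only [pairingCount, ite_and, Prod.mk.injEq, true_and, mul_add, mul_ite, mul_one,
    mul_zero, Finset.sum_add_distrib, Finset.sum_ite_irrel, Fintype.sum_prod_type, and_true,
    Finset.sum_const, Finset.card_univ, nsmul_eq_mul, Finset.sum_ite_eq', Finset.mem_univ,
    ↓reduceIte, Finset.sum_ite_eq]
  simp only [← Finset.mul_sum, ← sq]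
  ring

theorem low_rank_projection_second_moment_general
    {p q r : ℕ} (hr : 0 < r)
    {Ω : Type*} [MeasurableSpace Ω] (μ : Measure Ω)
    (G : Matrix (Fin p) (Fin q) ℝ)
    (P : Ω → Matrix (Fin q) (Fin r) ℝ) (hP : ∀ ij : Fin q × Fin r, Measurable (fun ω => P ω ij.1 ij.2))
    (hindep : iIndepFun
      (fun ij : Fin q × Fin r => fun ω => P ω ij.1 ij.2) μ)
    (hgauss : ∀ ij : Fin q × Fin r,
      Measure.map (fun ω => P ω ij.1 ij.2) μ = gaussianReal 0 (r : NNReal)⁻¹) :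
    ∫ ω, ∑ i : Fin p, ∑ j : Fin q, ((G * P ω * (P ω)ᵀ) i j) ^ 2 ∂μ
      = (1 + ((q : ℝ) + 1) / (r : ℝ)) * ∑ i : Fin p, ∑ j : Fin q, (G i j) ^ 2 := by
  have hlaw (ij : Fin q × Fin r) :
      HasLaw (fun ω ↦ P ω ij.1 ij.2) (gaussianReal 0 (r : ℝ≥0)⁻¹) μ :=
    ⟨(hP ij).aemeasurable, hgauss ij⟩
  have hint (i : Fin p) (j : Fin q) (a b : Fin q × Fin r) : Integrable (fun ω ↦
      G i a.1 * G i b.1 * (P ω a.1 a.2 * P ω j a.2 * P ω b.1 b.2 * P ω j b.2)) μ :=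
    (((hlaw a).memLp_of_gaussianReal 4).integrable_mul_mul_mul
      ((hlaw (j, a.2)).memLp_of_gaussianReal 4) ((hlaw b).memLp_of_gaussianReal 4)
      ((hlaw (j, b.2)).memLp_of_gaussianReal 4)).const_mul _
  have hpairs (j : Fin q) (a b : Fin q × Fin r) :=
    hindep.integral_mul_mul_mul_of_hasLaw_gaussianReal hlaw a (j, a.2) b (j, b.2)
  calc ∫ ω, ∑ i, ∑ j, ((G * P ω * (P ω)ᵀ) i j) ^ 2 ∂μ
      = ∑ i, ∑ j, ∑ a : Fin q × Fin r, ∑ b : Fin q × Fin r, G i a.1 * G i b.1 *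
          ∫ ω, P ω a.1 a.2 * P ω j a.2 * P ω b.1 b.2 * P ω j b.2 ∂μ := by
        simp_rw [mul_mul_transpose_apply_sq]
        simp (disch := fun_prop) only [integral_finsetSum, integral_const_mul]
    _ = (r : ℝ)⁻¹ ^ 2 * ∑ i, ∑ j, ∑ a : Fin q × Fin r, ∑ b : Fin q × Fin r,
          G i a.1 * G i b.1 * pairingCount a (j, a.2) b (j, b.2) := by
        simp only [hpairs, NNReal.coe_inv, NNReal.coe_natCast]
        simp only [Finset.mul_sum, mul_assoc, mul_left_comm ((r : ℝ)⁻¹ ^ 2)]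
    _ = (1 + ((q : ℝ) + 1) / r) * ∑ i, ∑ j, G i j ^ 2 := by
        rw [Matrix.sum_sum_mul_pairingCount, Fintype.card_fin, Fintype.card_fin]
        field_simp
        ring

/-- For a fixed matrix `G ∈ ℝ^{p×q}` and a random matrix `P ∈ ℝ^{q×r}`
with i.i.d. `N(0, 1/r)` entries, `E[‖G P Pᵀ‖²] = (1 + (q+1)/r) ‖G‖²` (Frobenius norm). -/
theorem low_rank_projection_second_moment
    {p q r : ℕ} (hp : 0 < p) (hq : 0 < q) (hr : 0 < r)
    {Ω : Type*} [MeasurableSpace Ω] (μ : Measure Ω) [IsProbabilityMeasure μ]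
    (G : Matrix (Fin p) (Fin q) ℝ)
    (P : Ω → Matrix (Fin q) (Fin r) ℝ) (hP : ∀ ij : Fin q × Fin r, Measurable (fun ω => P ω ij.1 ij.2))
    (hindep : iIndepFun
      (fun ij : Fin q × Fin r => fun ω => P ω ij.1 ij.2) μ)
    (hgauss : ∀ ij : Fin q × Fin r,
      Measure.map (fun ω => P ω ij.1 ij.2) μ = gaussianReal 0 (r : NNReal)⁻¹) :
    ∫ ω, ∑ i : Fin p, ∑ j : Fin q, ((G * P ω * (P ω)ᵀ) i j) ^ 2 ∂μ
      = (1 + ((q : ℝ) + 1) / (r : ℝ)) * ∑ i : Fin p, ∑ j : Fin q, (G i j) ^ 2 :=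
  low_rank_projection_second_moment_general hr μ G P hP hindep hgauss
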